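/- For all n ≥ 1, Spoiler wins every n-integer game in at most 2n rounds. -/

import Mathlib

/-- Validity of a position of the integer game: `u` is a word of integers,
`v` a word of pairs `⟨i, i-1⟩` (written `(i, i-1)`), `ts` the list of pairs of
matched token positions. It requires: order agreement of positions; a
`u`-token labelled `t` matched to a `v`-token labelled `⟨s+1, s⟩` satisfies
`t ∈ {s+1, s}`; neighbours are matched to neighbours; and consecutive
`v`-tokens labelled `⟨i, i-1⟩ ⟨j, j-1⟩` have matched `u`-labels `(i, j)` or
`(i-1, j-1)`, not mixed. -/
def IVal (u : List ℕ) (v : List (ℕ × ℕ)) (ts : List (ℕ × ℕ)) : Prop :=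
  (∀ p ∈ ts, p.1 < u.length ∧ p.2 < v.length) ∧
  (∀ p ∈ ts, ∀ q ∈ ts, (p.1 ≤ q.1 ↔ p.2 ≤ q.2)) ∧
  (∀ p ∈ ts, ∀ (a : ℕ) (s : ℕ × ℕ), u[p.1]? = some a → v[p.2]? = some s →
      a = s.1 ∨ a = s.2) ∧
  (∀ p ∈ ts, ∀ q ∈ ts, (q.1 = p.1 + 1 ↔ q.2 = p.2 + 1)) ∧
  (∀ p ∈ ts, ∀ q ∈ ts, q.1 = p.1 + 1 → q.2 = p.2 + 1 →
      ∀ (a b : ℕ) (s t : ℕ × ℕ),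
        u[p.1]? = some a → u[q.1]? = some b →
        v[p.2]? = some s → v[q.2]? = some t →
        (a = s.1 ∧ b = t.1) ∨ (a = s.2 ∧ b = t.2))

/-- Spoiler wins the integer game on `(u, v)` from position `ts` within `k`
rounds. -/
def SWin (u : List ℕ) (v : List (ℕ × ℕ)) : ℕ → List (ℕ × ℕ) → Prop
  | 0, ts => ¬ IVal u v ts
  | k + 1, ts => ¬ IVal u v ts ∨
      (∃ i, i < u.length ∧ ∀ j, j < v.length → SWin u v k ((i, j) :: ts)) ∨
      (∃ j, j < v.length ∧ ∀ i, i < u.length → SWin u v k ((i, j) :: ts))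

/-- Arena of the `n`-integer game: `u` is a word over `[0, n]`, `v` a word
over `{⟨i, i-1⟩ : 1 ≤ i ≤ n}`, the first letter of `v` is `⟨i, i-1⟩` where `i`
is the first letter of `u`, and the last letter of `v` is `⟨j+1, j⟩` where `j`
is the last letter of `u`. -/
def IntArena (n : ℕ) (u : List ℕ) (v : List (ℕ × ℕ)) : Prop :=
  u ≠ [] ∧ v ≠ [] ∧
  (∀ a ∈ u, a ≤ n) ∧
  (∀ s ∈ v, 1 ≤ s.1 ∧ s.1 ≤ n ∧ s.2 + 1 = s.1) ∧
  (∀ i : ℕ, u.head? = some i → v.head? = some (i, i - 1)) ∧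
  (∀ j : ℕ, u.getLast? = some j → v.getLast? = some (j + 1, j))

/-
Call a pebbled pair `(i, j)` *upper* if the `u`-letter equals the upper component of the `v`-letter,
and *lower* if it equals the lower one. The first letters of `u` and `v` behave like an upper pair
and the last letters like a lower pair, so Duplicator must switch from upper to lower somewhere;
the adjacency rule forbids this between neighbouring `v`-positions.
Spoiler locates the switch by climbing through the levels `c = 0, 1, …, n - 1`: a `u`-letter `c`
can only be answered by a `v`-letter `⟨c+1, c⟩` in lower fashion and, where no `u`-letter
equals `c`, a `v`-letter `⟨c+1, c⟩` only in upper fashion. Playing the leftmost such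
`u`-letter and then the rightmost such `v`-letter to its left shrinks the window between an upper
and a lower pair to one in which all `v`-letters exceed `⟨c+1, c⟩`, at a cost of two rounds.
After `n` levels no `v`-letter is left between the two pairs, so they are adjacent.
-/

theorem Nat.exists_greatest_lt {P : ℕ → Prop} {b : ℕ} (h : ∃ t < b, P t) :
    ∃ t < b, P t ∧ ∀ s, t < s → s < b → ¬ P s := by
  classical
  obtain ⟨t, ht, hmax⟩ := ((Finset.range b).filter P).exists_max_image id
    (by simpa [Finset.Nonempty] using h)
  simp only [Finset.mem_filter, Finset.mem_range, id] at ht hmax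
  exact ⟨t, ht.1, ht.2, fun s hts hsb hs => absurd (hmax s ⟨hsb, hs⟩) (by omega)⟩

section

variable {u : List ℕ} {v : List (ℕ × ℕ)} {ts : List (ℕ × ℕ)}

theorem swin_of_not_ival (h : ¬ IVal u v ts) : ∀ k, SWin u v k ts
  | 0 => h
  | _ + 1 => Or.inl h

theorem SWin.mono {k k' : ℕ} (hk : k ≤ k') :
    ∀ {ts : List (ℕ × ℕ)}, SWin u v k ts → SWin u v k' ts := by
  induction k' generalizing k with
  | zero => intro ts h; rwa [Nat.le_zero.1 hk] at h
  | succ k' ih =>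
    intro ts h
    rcases k with _ | k
    · exact Or.inl h
    rcases h with h | ⟨i, hi, f⟩ | ⟨j, hj, f⟩
    · exact Or.inl h
    · exact Or.inr (Or.inl ⟨i, hi, fun j hj => ih (by omega) (f j hj)⟩)
    · exact Or.inr (Or.inr ⟨j, hj, fun i hi => ih (by omega) (f i hi)⟩)

theorem swin_succ_of_u_move {k : ℕ} (i : ℕ) (hi : i < u.length)
    (h : ∀ j < v.length, IVal u v ((i, j) :: ts) → SWin u v k ((i, j) :: ts)) :
    SWin u v (k + 1) ts :=
  Or.inr (Or.inl ⟨i, hi, fun j hj => by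
    by_cases hI : IVal u v ((i, j) :: ts)
    exacts [h j hj hI, swin_of_not_ival hI k]⟩)

theorem swin_succ_of_v_move {k : ℕ} (j : ℕ) (hj : j < v.length)
    (h : ∀ i < u.length, IVal u v ((i, j) :: ts) → SWin u v k ((i, j) :: ts)) :
    SWin u v (k + 1) ts :=
  Or.inr (Or.inr ⟨j, hj, fun i hi => by
    by_cases hI : IVal u v ((i, j) :: ts)
    exacts [h i hi hI, swin_of_not_ival hI k]⟩)

/-- The default `⟨1, 0⟩` is itself a legal letter, so `getD_eq_vUpper` holds at every index. -/
def vUpper (v : List (ℕ × ℕ)) (t : ℕ) : ℕ := (v.getD t (1, 0)).1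

theorem getElem?_eq_some_getD {α : Type*} {l : List α} {i : ℕ} (d : α) (hi : i < l.length) :
    l[i]? = some (l.getD i d) := by
  rw [List.getD_eq_getElem _ _ hi, List.getElem?_eq_getElem hi]

theorem getD_eq_vUpper (hv : ∀ s ∈ v, s.2 + 1 = s.1) (t : ℕ) :
    v.getD t (1, 0) = (vUpper v t, vUpper v t - 1) ∧ 1 ≤ vUpper v t := by
  unfold vUpper
  rcases lt_or_ge t v.length with ht | ht
  · rw [List.getD_eq_getElem _ _ ht]
    have := hv _ (List.getElem_mem ht)
    exact ⟨Prod.ext rfl (by simp only; omega), by omega⟩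
  · simp [ht]

theorem getElem?_eq_vUpper (hv : ∀ s ∈ v, s.2 + 1 = s.1) {t : ℕ} (ht : t < v.length) :
    v[t]? = some (vUpper v t, vUpper v t - 1) := by
  rw [getElem?_eq_some_getD (1, 0) ht, (getD_eq_vUpper hv t).1]

theorem getD_zero_eq_vUpper_zero (hu : u ≠ [])
    (hhead : ∀ i : ℕ, u.head? = some i → v.head? = some (i, i - 1)) :
    u.getD 0 0 = vUpper v 0 := by
  have h := hhead _ (by rw [List.head?_eq_getElem?]; exact
    getElem?_eq_some_getD 0 (List.length_pos_iff.2 hu))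
  rw [List.head?_eq_getElem?, List.getElem?_eq_some_iff] at h
  obtain ⟨h0, h⟩ := h
  rw [vUpper, List.getD_eq_getElem _ _ h0, h]

theorem getD_last_add_one_eq_vUpper_last (hu : u ≠ [])
    (hlast : ∀ j : ℕ, u.getLast? = some j → v.getLast? = some (j + 1, j)) :
    u.getD (u.length - 1) 0 + 1 = vUpper v (v.length - 1) := by
  have h := hlast _ (by rw [List.getLast?_eq_getElem?]; exact
    getElem?_eq_some_getD 0 (by have := List.length_pos_iff.2 hu; omega))
  rw [List.getLast?_eq_getElem?, List.getElem?_eq_some_iff] at h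
  obtain ⟨h0, h⟩ := h
  rw [vUpper, List.getD_eq_getElem _ _ h0, h]

namespace IVal

theorem lt_length (h : IVal u v ts) {i j : ℕ} (hij : (i, j) ∈ ts) :
    i < u.length ∧ j < v.length :=
  h.1 _ hij

theorem le_iff (h : IVal u v ts) {p q : ℕ × ℕ} (hp : p ∈ ts) (hq : q ∈ ts) :
    p.1 ≤ q.1 ↔ p.2 ≤ q.2 :=
  h.2.1 p hp q hq

theorem upper_or_lower (hv : ∀ s ∈ v, s.2 + 1 = s.1) (h : IVal u v ts) {i j : ℕ}
    (hij : (i, j) ∈ ts) : u.getD i 0 = vUpper v j ∨ u.getD i 0 + 1 = vUpper v j := by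
  have hlt := h.lt_length hij
  have := h.2.2.1 _ hij _ _ (getElem?_eq_some_getD 0 hlt.1) (getElem?_eq_vUpper hv hlt.2)
  dsimp only at this
  have := (getD_eq_vUpper hv j).2
  omega

theorem not_upper_of_lower_succ (hv : ∀ s ∈ v, s.2 + 1 = s.1) (h : IVal u v ts) {p q j : ℕ}
    (hp : (p, j) ∈ ts) (hq : (q, j + 1) ∈ ts) (hq_lower : u.getD q 0 + 1 = vUpper v (j + 1)) :
    u.getD p 0 ≠ vUpper v j := by
  have hpl := h.lt_length hp
  have hql := h.lt_length hq
  have hqp : q = p + 1 := (h.2.2.2.1 _ hp _ hq).2 rfl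
  subst hqp
  have := h.2.2.2.2 _ hp _ hq rfl rfl _ _ _ _ (getElem?_eq_some_getD 0 hpl.1)
    (getElem?_eq_some_getD 0 hql.1) (getElem?_eq_vUpper hv hpl.2) (getElem?_eq_vUpper hv hql.2)
  dsimp only at this
  have := (getD_eq_vUpper hv j).2
  omega

end IVal

def LeftEnd (u : List ℕ) (v : List (ℕ × ℕ)) (ts : List (ℕ × ℕ)) (su sw : ℕ) : Prop :=
  su = 0 ∧ sw = 0 ∨ ∃ p j, (p, j) ∈ ts ∧ su = p + 1 ∧ sw = j + 1 ∧
    p < u.length ∧ j < v.length ∧ u.getD p 0 = vUpper v j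

def RightEnd (u : List ℕ) (v : List (ℕ × ℕ)) (ts : List (ℕ × ℕ)) (eu ew : ℕ) : Prop :=
  eu = u.length ∧ ew = v.length ∨ (eu, ew) ∈ ts ∧
    eu < u.length ∧ ew < v.length ∧ u.getD eu 0 + 1 = vUpper v ew

theorem LeftEnd.cons {su sw : ℕ} (h : LeftEnd u v ts su sw) (x : ℕ × ℕ) :
    LeftEnd u v (x :: ts) su sw := by
  rcases h with h | ⟨p, j, hpj, h⟩
  exacts [Or.inl h, Or.inr ⟨p, j, List.mem_cons_of_mem _ hpj, h⟩]

theorem RightEnd.cons {eu ew : ℕ} (h : RightEnd u v ts eu ew) (x : ℕ × ℕ) :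
    RightEnd u v (x :: ts) eu ew := by
  rcases h with h | ⟨hmem, h⟩
  exacts [Or.inl h, Or.inr ⟨List.mem_cons_of_mem _ hmem, h⟩]

theorem RightEnd.le_length {eu ew : ℕ} (h : RightEnd u v ts eu ew) :
    eu ≤ u.length ∧ ew ≤ v.length := by
  rcases h with h | ⟨-, h⟩ <;> omega

theorem LeftEnd.le_iff {su sw i j : ℕ} (hL : LeftEnd u v ts su sw)
    (h : IVal u v ((i, j) :: ts)) : su ≤ i ↔ sw ≤ j := by
  rcases hL with ⟨rfl, rfl⟩ | ⟨p, q, hpq, rfl, rfl, -⟩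
  · simp
  · have := h.le_iff (List.mem_cons_self) (List.mem_cons_of_mem _ hpq)
    simp only at this
    omega

theorem RightEnd.lt_iff {eu ew i j : ℕ} (hR : RightEnd u v ts eu ew)
    (h : IVal u v ((i, j) :: ts)) : i < eu ↔ j < ew := by
  have := h.lt_length List.mem_cons_self
  rcases hR with ⟨rfl, rfl⟩ | ⟨hmem, -⟩
  · omega
  · have := h.le_iff (List.mem_cons_of_mem _ hmem) (List.mem_cons_self)
    simp only at this
    omega

/-- A window of height `d` at level `c`: its left end follows an upper pair (or is the start of
both words), its right end is a lower pair (or the end of both words), its `u`-letters are at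
least `c` and the upper components of its `v`-letters lie in `[c + 1, c + d]`. -/
structure IsWindow (u : List ℕ) (v : List (ℕ × ℕ)) (ts : List (ℕ × ℕ))
    (d c su sw eu ew : ℕ) : Prop where
  left : LeftEnd u v ts su sw
  right : RightEnd u v ts eu ew
  su_le_eu : su ≤ eu
  sw_le_ew : sw ≤ ew
  le_u : ∀ i, su ≤ i → i < eu → c ≤ u.getD i 0
  mem_v : ∀ t, sw ≤ t → t < ew → c + 1 ≤ vUpper v t ∧ vUpper v t ≤ c + d

/-- The extra round Spoiler needs when exactly one end of the window is an end of the words: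
there the contradiction comes from the first or last letters rather than from two pebbled pairs. -/
def windowSlack (u : List ℕ) (su eu : ℕ) : ℕ := if (su = 0 ↔ eu = u.length) then 0 else 1

theorem windowSlack_le_one (su eu : ℕ) : windowSlack u su eu ≤ 1 := by
  unfold windowSlack; split <;> omega

theorem windowSlack_succ (p eu : ℕ) :
    windowSlack u (p + 1) eu = if eu = u.length then 1 else 0 := by
  unfold windowSlack; by_cases h : eu = u.length <;> simp [h]

variable {d c su sw eu ew : ℕ}

theorem IsWindow.swin_zero (hv : ∀ s ∈ v, s.2 + 1 = s.1) (hv0 : v ≠ [])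
    (hhead : u.getD 0 0 = vUpper v 0)
    (hlast : u.getD (u.length - 1) 0 + 1 = vUpper v (v.length - 1))
    (hw : IsWindow u v ts 0 c su sw eu ew) : SWin u v (windowSlack u su eu) ts := by
  have hew : ew = sw := le_antisymm (not_lt.1 fun h => by have := hw.mem_v sw le_rfl h; omega)
    hw.sw_le_ew
  have hvl : 0 < v.length := List.length_pos_iff.2 hv0
  rcases hw.left with ⟨rfl, rfl⟩ | ⟨p, j, hpj, rfl, rfl, hp, hj, hpj_upper⟩ <;>
    rcases hw.right with ⟨rfl, rfl⟩ | ⟨hq, heu, -, hq_lower⟩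
  · omega
  · -- the pair `(eu, 0)` is lower while the first letters match upper, so `eu ≠ 0`;
    -- an answer to `eu - 1` would have to lie left of the first `v`-position
    subst hew
    have : eu ≠ 0 := by rintro rfl; omega
    rw [windowSlack, if_neg (by omega)]
    refine swin_succ_of_u_move (eu - 1) (by omega) fun t _ hI => swin_of_not_ival (fun _ => ?_) 0
    have := hw.right.lt_iff hI
    omega
  · -- symmetrically, `p` is not the last `u`-position
    have : p ≠ u.length - 1 := by
      rintro rfl
      rw [show v.length - 1 = j by omega] at hlast
      omega
    rw [windowSlack, if_neg (by omega)]
    refine swin_succ_of_u_move (p + 1) (by omega) fun t ht hI => swin_of_not_ival (fun _ => ?_) 0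
    have := hw.left.le_iff hI
    omega
  · rw [windowSlack, if_pos (by omega)]
    exact fun hI => hI.not_upper_of_lower_succ hv hpj (hew ▸ hq) (hew ▸ hq_lower) hpj_upper

theorem IsWindow.succ_level (hw : IsWindow u v ts (d + 1) c su sw eu ew)
    (hu : ∀ i, su ≤ i → i < eu → u.getD i 0 ≠ c)
    (hv : ∀ t, sw ≤ t → t < ew → vUpper v t ≠ c + 1) :
    IsWindow u v ts d (c + 1) su sw eu ew where
  left := hw.left
  right := hw.right
  su_le_eu := hw.su_le_eu
  sw_le_ew := hw.sw_le_ew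
  le_u i h1 h2 := by have := hw.le_u i h1 h2; have := hu i h1 h2; omega
  mem_v t h1 h2 := by have := hw.mem_v t h1 h2; have := hv t h1 h2; omega

/-- Without `u`-letters `c` in the window, a `v`-letter `⟨c + 1, c⟩` can only be answered by
an upper pair; if it is the rightmost such letter, what lies to its right is a window one level
higher. -/
theorem IsWindow.of_v_move (hv : ∀ s ∈ v, s.2 + 1 = s.1)
    (hw : IsWindow u v ts (d + 1) c su sw eu ew) (hu : ∀ i, su ≤ i → i < eu → u.getD i 0 ≠ c)
    {t : ℕ} (hst : sw ≤ t) (hte : t < ew) (ht : vUpper v t = c + 1)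
    (hmax : ∀ s, t < s → s < ew → vUpper v s ≠ c + 1) {z : ℕ}
    (hI : IVal u v ((z, t) :: ts)) :
    IsWindow u v ((z, t) :: ts) d (c + 1) (z + 1) (t + 1) eu ew := by
  have hsz := (hw.left.le_iff hI).2 hst
  have hze := (hw.right.lt_iff hI).2 hte
  have hlen := hI.lt_length List.mem_cons_self
  have := hI.upper_or_lower hv List.mem_cons_self
  have := hw.le_u z hsz hze
  have := hu z hsz hze
  refine ⟨Or.inr ⟨z, t, List.mem_cons_self, rfl, rfl, hlen.1, hlen.2, by omega⟩,
    hw.right.cons _, hze, hte, fun i h1 h2 => ?_, fun s h1 h2 => ?_⟩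
  · have := hw.le_u i (by omega) h2
    have := hu i (by omega) h2
    omega
  · have := hw.mem_v s (by omega) h2
    have := hmax s h1 h2
    omega

/-- A `u`-letter `c` can only be answered by a lower pair, which cuts the window on its right. -/
theorem IsWindow.of_u_move (hv : ∀ s ∈ v, s.2 + 1 = s.1)
    (hw : IsWindow u v ts d c su sw eu ew) {z : ℕ} (hsz : su ≤ z) (hze : z < eu)
    (hz : u.getD z 0 = c) {t : ℕ} (hI : IVal u v ((z, t) :: ts)) :
    IsWindow u v ((z, t) :: ts) d c su sw z t := by
  have hst := (hw.left.le_iff hI).1 hsz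
  have hte := (hw.right.lt_iff hI).1 hze
  have hlen := hI.lt_length List.mem_cons_self
  have := hI.upper_or_lower hv List.mem_cons_self
  have := hw.mem_v t hst hte
  exact ⟨hw.left.cons _, Or.inr ⟨List.mem_cons_self, hlen.1, hlen.2, by omega⟩, hsz, hst,
    fun i h1 h2 => hw.le_u i h1 (by omega), fun s h1 h2 => hw.mem_v s h1 (by omega)⟩

theorem IsWindow.swin_succ_of_forall_ne (hv : ∀ s ∈ v, s.2 + 1 = s.1)
    (IH : ∀ {c su sw eu ew ts}, IsWindow u v ts d c su sw eu ew →
      SWin u v (2 * d + windowSlack u su eu) ts)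
    (hw : IsWindow u v ts (d + 1) c su sw eu ew) (hu : ∀ i, su ≤ i → i < eu → u.getD i 0 ≠ c) :
    SWin u v (2 * d + 1 + if eu = u.length then 1 else 0) ts := by
  by_cases hC : ∃ t < ew, sw ≤ t ∧ vUpper v t = c + 1
  · obtain ⟨t, hte, ⟨hst, ht⟩, hmax⟩ := Nat.exists_greatest_lt hC
    rw [add_right_comm]
    refine swin_succ_of_v_move t (by have := hw.right.le_length; omega) fun z _ hI => ?_
    refine (IH (hw.of_v_move hv hu hst hte ht ?_ hI)).mono (by rw [windowSlack_succ])
    exact fun s h1 h2 h => hmax s h1 h2 ⟨by omega, h⟩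
  · push Not at hC
    refine (IH (hw.succ_level hu fun t h1 h2 => hC t h2 h1)).mono ?_
    have := windowSlack_le_one (u := u) su eu
    split_ifs <;> omega

theorem IsWindow.swin (hv : ∀ s ∈ v, s.2 + 1 = s.1) (hv0 : v ≠ [])
    (hhead : u.getD 0 0 = vUpper v 0)
    (hlast : u.getD (u.length - 1) 0 + 1 = vUpper v (v.length - 1))
    (hw : IsWindow u v ts d c su sw eu ew) : SWin u v (2 * d + windowSlack u su eu) ts := by
  induction d generalizing c su sw eu ew ts with
  | zero => simpa using hw.swin_zero hv hv0 hhead hlast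
  | succ d IH =>
    by_cases hA : ∃ z, su ≤ z ∧ z < eu ∧ u.getD z 0 = c
    · obtain ⟨z, ⟨hsz, hze, hz⟩, hmin⟩ : ∃ z, (su ≤ z ∧ z < eu ∧ u.getD z 0 = c) ∧
          ∀ i < z, ¬ (su ≤ i ∧ i < eu ∧ u.getD i 0 = c) :=
        ⟨Nat.find hA, Nat.find_spec hA, fun _ => Nat.find_min hA⟩
      rw [show 2 * (d + 1) + windowSlack u su eu = 2 * d + windowSlack u su eu + 1 + 1 by ring]
      refine swin_succ_of_u_move z (by have := hw.right.le_length; omega) fun t _ hI => ?_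
      refine ((hw.of_u_move hv hsz hze hz hI).swin_succ_of_forall_ne hv IH
        fun i h1 h2 h => hmin i h2 ⟨h1, by omega, h⟩).mono ?_
      rw [if_neg (by have := hw.right.le_length; omega)]
      omega
    · push Not at hA
      refine (hw.swin_succ_of_forall_ne hv IH hA).mono ?_
      have := windowSlack_le_one (u := u) su eu
      split_ifs <;> omega

end

theorem spoiler_wins_integer_game_general (n : ℕ)
    (u : List ℕ) (v : List (ℕ × ℕ)) (h : IntArena n u v) :
    SWin u v (2 * n) [] := by
  obtain ⟨hu, hv0, -, hv, hhead, hlast⟩ := h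
  have hw : IsWindow u v [] n 0 0 0 u.length v.length :=
    ⟨Or.inl ⟨rfl, rfl⟩, Or.inl ⟨rfl, rfl⟩, Nat.zero_le _, Nat.zero_le _,
      fun _ _ _ => Nat.zero_le _, fun t _ ht => by
        have := hv _ (List.getElem_mem ht)
        simp only [vUpper, List.getD_eq_getElem _ _ ht]
        omega⟩
  simpa [windowSlack] using hw.swin (fun s hs => (hv s hs).2.2) hv0
    (getD_zero_eq_vUpper_zero hu hhead) (getD_last_add_one_eq_vUpper_last hu hlast)

/-- for all `n ≥ 1`, Spoiler wins every `n`-integer game in at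
most `2n` rounds. -/
theorem spoiler_wins_integer_game (n : ℕ) (hn : 1 ≤ n)
    (u : List ℕ) (v : List (ℕ × ℕ)) (h : IntArena n u v) :
    SWin u v (2 * n) [] :=
  spoiler_wins_integer_game_general n u v h
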